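/- Let n ≥ 1, let 𝕊_n be the symmetric group on n letters and S ⊆ 𝕊_n an inverse-closed subset. Let (π^α)_{α∈A} be a finite family of pairwise non-unitarily-equivalent irreducible unitary representations of 𝕊_n, of dimensions d_α, such that every irreducible unitary representation of 𝕊_n is unitarily equivalent to some π^α. Let C > 0 and suppose that for each α ∈ A, 1 ≤ i ≤ d_α, and eigenvalue λ of π^α(S), F^{α,λ}_i is a finite family of vectors in E_λ(π^α(S)) which is a tight frame for E_λ(π^α(S)) with frame constant C: ∑_{ψ ∈ F^{α,λ}_i} |⟨v, ψ⟩|² = C·‖v‖² for all v ∈ E_λ(π^α(S)). Then the collection Φ = {Θ̃_{π^α,i,λ}(ψ) : α ∈ A, 1 ≤ i ≤ d_α, λ an eigenvalue of π^α(S), ψ ∈ F^{α,λ}_i} is a tight frame for L²(𝕊_n) with frame constant C: ∑_{φ ∈ Φ} |⟨f, φ⟩|² = C·‖f‖² for all f ∈ L²(𝕊_n). -/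

import Mathlib

open scoped BigOperators

noncomputable section

/-- A unitary representation of a group `G` of dimension `d`: a group homomorphism from `G`
into the group of `d × d` complex unitary matrices. -/
abbrev URep (G : Type*) [Group G] (d : ℕ) : Type _ :=
  G →* Matrix.unitaryGroup (Fin d) ℂ

/-- A unitary representation is irreducible if its dimension is positive and the only
subspaces `W ⊆ ℂ^d` with `π(g)W ⊆ W` for all `g` are `{0}` and `ℂ^d`. -/
def URepIrreducible {G : Type*} [Group G] {d : ℕ} (π : URep G d) : Prop :=
  0 < d ∧ ∀ W : Submodule ℂ (Fin d → ℂ),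
    (∀ g : G, ∀ ξ ∈ W, ((π g : Matrix (Fin d) (Fin d) ℂ)).mulVec ξ ∈ W) → W = ⊥ ∨ W = ⊤

/-- The coefficient function `π_{j,i}(g) = (π(g))_{i,j}`. -/
def coeff {G : Type*} [Group G] {d : ℕ} (π : URep G d) (j i : Fin d) : G → ℂ :=
  fun g => (π g : Matrix (Fin d) (Fin d) ℂ) i j

/-- The subspace `E_{π,i} = span{π_{j,i} : 1 ≤ j ≤ d}` of `L²(G)`. -/
def Esp {G : Type*} [Group G] {d : ℕ} (π : URep G d) (i : Fin d) : Submodule ℂ (G → ℂ) :=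
  Submodule.span ℂ (Set.range fun j : Fin d => coeff π j i)

/-- Unitary equivalence of two unitary representations: the dimensions agree and there is a
unitary matrix `U` with `U⁻¹ π(g) U = σ(g)` for all `g`. -/
def UEquiv {G : Type*} [Group G] {d d' : ℕ} (π : URep G d) (σ : URep G d') : Prop :=
  ∃ h : d = d', ∃ U : Matrix (Fin d') (Fin d') ℂ, U ∈ Matrix.unitaryGroup (Fin d') ℂ ∧
    ∀ g : G, U⁻¹ * (Matrix.reindex (finCongr h) (finCongr h)
        ((π g : Matrix (Fin d) (Fin d) ℂ))) * U = (σ g : Matrix (Fin d') (Fin d') ℂ)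

/-- `π(S) = ∑_{a ∈ S} π(a)`. -/
def repSum {G : Type*} [Group G] {d : ℕ} (π : URep G d) (S : Finset G) :
    Matrix (Fin d) (Fin d) ℂ :=
  ∑ a ∈ S, (π a : Matrix (Fin d) (Fin d) ℂ)

/-- `X` is a `λ`-eigenvector (possibly zero) of `M`: `M X = λ X`. -/
def IsEigvec {d : ℕ} (M : Matrix (Fin d) (Fin d) ℂ) (lam : ℝ) (X : Fin d → ℂ) : Prop :=
  M.mulVec X = (lam : ℂ) • X

/-- `λ` is an eigenvalue of `M`. -/
def IsEigval {d : ℕ} (M : Matrix (Fin d) (Fin d) ℂ) (lam : ℝ) : Prop :=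
  ∃ X : Fin d → ℂ, X ≠ 0 ∧ IsEigvec M lam X

/-- The `λ`-eigenspace `E_λ(M)` as a submodule of `ℂ^d`. -/
def eigSp {d : ℕ} (M : Matrix (Fin d) (Fin d) ℂ) (lam : ℝ) : Submodule ℂ (Fin d → ℂ) :=
  LinearMap.ker (M.mulVecLin - (lam : ℂ) • LinearMap.id)

/-- The inner product `⟨u, v⟩ = ∑ u(x) conj(v(x))`, linear in the first variable
(the convention of the paper). -/
def dotC {X : Type*} [Fintype X] (u v : X → ℂ) : ℂ :=
  ∑ x, u x * (starRingEnd ℂ) (v x)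

/-- The squared norm `‖u‖² = ∑ |u(x)|²`. -/
def norm2 {X : Type*} [Fintype X] (u : X → ℂ) : ℝ :=
  ∑ x, Complex.normSq (u x)

/-- The map `Θ_{π,i} : X ↦ ∑_k X_k π_{k,i}`. -/
def Theta {G : Type*} [Group G] {d : ℕ} (π : URep G d) (i : Fin d)
    (X : Fin d → ℂ) : G → ℂ :=
  fun g => ∑ k, X k * coeff π k i g

/-- The map `Θ_{π,i}` as a linear map. -/
def ThetaL {G : Type*} [Group G] {d : ℕ} (π : URep G d) (i : Fin d) :
    (Fin d → ℂ) →ₗ[ℂ] (G → ℂ) where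
  toFun X := fun g => ∑ k, X k * coeff π k i g
  map_add' X Y := by
    funext g
    simp [add_mul, Finset.sum_add_distrib]
  map_smul' c X := by
    funext g
    simp [Finset.mul_sum, mul_assoc]

/-- The space `Z_{π,i,λ} = {∑_k X_k π_{k,i} : X ∈ E_λ(π(S))}`. -/
def Zset {G : Type*} [Group G] {d : ℕ} (π : URep G d) (i : Fin d) (lam : ℝ) (S : Finset G) :
    Set (G → ℂ) :=
  {f | ∃ X : Fin d → ℂ, IsEigvec (repSum π S) lam X ∧ f = Theta π i X}

/-- The normalized map `Θ̃_{π,i} = √(d/n!) Θ_{π,i}` for the symmetric group `𝕊_n`. -/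
def ThetaT (n : ℕ) {d : ℕ} (π : URep (Equiv.Perm (Fin n)) d) (i : Fin d)
    (X : Fin d → ℂ) : Equiv.Perm (Fin n) → ℂ :=
  fun g => (Real.sqrt (d / n.factorial) : ℂ) * Theta π i X g

/-- `ψ` is a frame for `W` with lower bound `A` and upper bound `B`:
`A‖v‖² ≤ ∑_t |⟨v, ψ_t⟩|² ≤ B‖v‖²` for all `v ∈ W`. -/
def IsFrameOn {X ι : Type*} [Fintype X] [Fintype ι] (ψ : ι → (X → ℂ)) (W : Set (X → ℂ))
    (A B : ℝ) : Prop :=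
  0 < A ∧ A ≤ B ∧ (∀ t, ψ t ∈ W) ∧
    ∀ v ∈ W, A * norm2 v ≤ ∑ t, Complex.normSq (dotC v (ψ t)) ∧
      ∑ t, Complex.normSq (dotC v (ψ t)) ≤ B * norm2 v

/-- `ψ` is a frame for `W` (for some frame bounds `0 < A ≤ B`). -/
def IsFrameIn {X ι : Type*} [Fintype X] [Fintype ι] (ψ : ι → (X → ℂ)) (W : Set (X → ℂ)) :
    Prop :=
  ∃ A B : ℝ, IsFrameOn ψ W A B


/-!
Write `v_{α,i} ∈ ℂ^{d_α}` for the vector with entries `√(d_α/|G|) ⟨f, π^α_{k,i}⟩`; it is the image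
of `f` under the adjoint of `Θ̃_{π^α,i}`, so `⟨f, Θ̃_{π^α,i} ψ⟩ = ⟨v_{α,i}, ψ⟩`. Since `S` is
inverse-closed, `π^α(S)` is Hermitian, so `ℂ^{d_α}` is the orthogonal sum of its eigenspaces, and
tight frames of the summands with a common constant `C` combine: the sum over `λ` and `ψ` equals
`C ‖v_{α,i}‖²`. Finally `∑_{α,i} ‖v_{α,i}‖² = ‖f‖²` is Parseval's identity for the orthonormal
basis `√(d_α/|G|) π^α_{k,i}` of `L²(G)`. Orthonormality is Schur orthogonality. Completeness holds
because a minimal right-invariant subspace orthogonal to all matrix coefficients would carry an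
irreducible representation; that representation is equivalent to some `π^α`, so its own matrix
coefficients, which span the subspace, are combinations of those of `π^α`.
-/

open scoped Matrix InnerProductSpace ComplexOrder
open Module

namespace URep

variable {G : Type*} [Group G] {d e : ℕ}

lemma coe_mul (π : URep G d) (g h : G) : (π (g * h)).1 = (π g).1 * (π h).1 := by
  rw [map_mul]; rfl

lemma coe_inv (π : URep G d) (g : G) : (π g⁻¹).1 = star (π g).1 := by
  rw [map_inv]; rfl

lemma coe_inv_mul (π : URep G d) (g : G) : (π g⁻¹).1 * (π g).1 = 1 := by
  rw [← coe_mul, inv_mul_cancel, map_one]; rfl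

lemma conjTranspose_coe_inv (π : URep G d) (g : G) : (π g⁻¹).1ᴴ = (π g).1 := by
  rw [coe_inv, ← Matrix.star_eq_conjTranspose, star_star]

lemma coeff_mul_apply (π : URep G d) (k i : Fin d) (g h : G) :
    coeff π k i (g * h) = ∑ l, (π h).1 l k * coeff π l i g := by
  simp [coeff, Matrix.mul_apply, mul_comm]

end URep

section Schur

variable {G : Type*} [Group G] {d e : ℕ}

lemma URepIrreducible.eq_smul_one_of_commute {π : URep G d} (hπ : URepIrreducible π)
    {M : Matrix (Fin d) (Fin d) ℂ} (hM : ∀ g, (π g).1 * M = M * (π g).1) :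
    ∃ c : ℂ, M = c • 1 := by
  have : Nonempty (Fin d) := ⟨⟨0, hπ.1⟩⟩
  obtain ⟨c, hc⟩ := Module.End.exists_eigenvalue M.mulVecLin
  have hinv : ∀ g, ∀ ξ ∈ Module.End.eigenspace M.mulVecLin c,
      (π g).1 *ᵥ ξ ∈ Module.End.eigenspace M.mulVecLin c := by
    intro g ξ hξ
    rw [Module.End.mem_eigenspace_iff, Matrix.mulVecLin_apply] at hξ ⊢
    rw [Matrix.mulVec_mulVec, ← hM, ← Matrix.mulVec_mulVec, hξ, Matrix.mulVec_smul]
  have htop := (hπ.2 _ hinv).resolve_left hc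
  refine ⟨c, Matrix.toLin'.injective (LinearMap.ext fun ξ => ?_)⟩
  have hξ := Module.End.mem_eigenspace_iff.1 (htop ▸ Submodule.mem_top : ξ ∈ _)
  simpa using hξ

lemma Matrix.card_le_of_mul_eq_smul_one {m n : Type*} [Fintype m] [Fintype n] [DecidableEq n]
    {A : Matrix n m ℂ} {B : Matrix m n ℂ} {c : ℂ} (hc : c ≠ 0) (h : A * B = c • 1) :
    Fintype.card n ≤ Fintype.card m := by
  have h1 : (c⁻¹ • A) * B = 1 := by
    rw [Matrix.smul_mul, h, smul_smul, inv_mul_cancel₀ hc, one_smul]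
  calc Fintype.card n = (1 : Matrix n n ℂ).rank := Matrix.rank_one.symm
    _ ≤ B.rank := h1 ▸ Matrix.rank_mul_le_right _ _
    _ ≤ Fintype.card m := Matrix.rank_le_card_height B

lemma Matrix.inv_sqrt_smul_mem_unitaryGroup {n : Type*} [Fintype n] [DecidableEq n]
    {T : Matrix n n ℂ} {r : ℝ} (hr : 0 < r) (h : Tᴴ * T = (r : ℂ) • 1) :
    ((Real.sqrt r : ℂ)⁻¹ • T) ∈ Matrix.unitaryGroup n ℂ := by
  have hs : (Real.sqrt r : ℂ)⁻¹ * (Real.sqrt r : ℂ)⁻¹ * r = 1 := by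
    rw [← mul_inv, ← Complex.ofReal_mul, Real.mul_self_sqrt hr.le, inv_mul_cancel₀]
    exact_mod_cast hr.ne'
  rw [Matrix.mem_unitaryGroup_iff', Matrix.star_eq_conjTranspose, Matrix.conjTranspose_smul,
    Matrix.smul_mul, Matrix.mul_smul, h, smul_smul, smul_smul, star_inv₀, Complex.star_def,
    Complex.conj_ofReal, hs, one_smul]

/-- By Schur's lemma `TᴴT` and `TTᴴ` are nonzero scalars, so `T` is square and a multiple of a
unitary matrix. -/
lemma uEquiv_of_intertwiner {π : URep G d} {σ : URep G e} (hπ : URepIrreducible π)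
    (hσ : URepIrreducible σ) {T : Matrix (Fin d) (Fin e) ℂ}
    (hT : ∀ g, (π g).1 * T = T * (σ g).1) (hT0 : T ≠ 0) : UEquiv π σ := by
  have hTH : ∀ g, (σ g).1 * Tᴴ = Tᴴ * (π g).1 := fun g => by
    have h := congrArg Matrix.conjTranspose (hT g⁻¹)
    rw [Matrix.conjTranspose_mul, Matrix.conjTranspose_mul, URep.conjTranspose_coe_inv,
      URep.conjTranspose_coe_inv] at h
    exact h.symm
  obtain ⟨c, hc⟩ := hσ.eq_smul_one_of_commute (M := Tᴴ * T) fun g => by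
    rw [← Matrix.mul_assoc, hTH, Matrix.mul_assoc, hT, Matrix.mul_assoc]
  obtain ⟨c', hc'⟩ := hπ.eq_smul_one_of_commute (M := T * Tᴴ) fun g => by
    rw [← Matrix.mul_assoc, hT, Matrix.mul_assoc, hTH, Matrix.mul_assoc]
  have hc0 : c ≠ 0 := by
    rintro rfl
    exact hT0 (Matrix.conjTranspose_mul_self_eq_zero.1 (by simpa using hc))
  have hc'0 : c' ≠ 0 := by
    rintro rfl
    exact hT0 (Matrix.self_mul_conjTranspose_eq_zero.1 (by simpa using hc'))
  obtain rfl : d = e := by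
    simpa using le_antisymm (Matrix.card_le_of_mul_eq_smul_one hc'0 hc')
      (Matrix.card_le_of_mul_eq_smul_one hc0 hc)
  have hc_nonneg : 0 ≤ c := by
    simpa [hc] using (Matrix.posSemidef_conjTranspose_mul_self T).diag_nonneg (i := ⟨0, hπ.1⟩)
  obtain ⟨r, hr, rfl⟩ := RCLike.pos_iff_exists_ofReal.1 (lt_of_le_of_ne hc_nonneg hc0.symm)
  have hU := Matrix.inv_sqrt_smul_mem_unitaryGroup hr hc
  refine ⟨rfl, _, hU, fun g => ?_⟩
  rw [finCongr_refl, Matrix.reindex_refl_refl, Matrix.inv_eq_left_inv hU.1, Matrix.mul_assoc,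
    Matrix.mul_smul, hT, ← Matrix.smul_mul, ← Matrix.mul_assoc, hU.1, Matrix.one_mul]

end Schur

namespace URep

variable {G : Type*} [Group G] [Fintype G] {d e : ℕ}

def average (π : URep G d) (σ : URep G e) (E : Matrix (Fin d) (Fin e) ℂ) :
    Matrix (Fin d) (Fin e) ℂ :=
  ∑ g, (π g).1 * E * (σ g⁻¹).1

lemma mul_average (π : URep G d) (σ : URep G e) (E : Matrix (Fin d) (Fin e) ℂ) (h : G) :
    (π h).1 * average π σ E = average π σ E * (σ h).1 := by
  rw [average, Matrix.mul_sum, Matrix.sum_mul]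
  refine Fintype.sum_equiv (Equiv.mulLeft h) _ _ fun g => ?_
  simp only [Equiv.coe_mulLeft, coe_mul, mul_inv_rev, Matrix.mul_assoc]
  rw [coe_inv_mul, Matrix.mul_one]

lemma average_single_apply (π : URep G d) (σ : URep G e) (a i : Fin d) (b j : Fin e) :
    average π σ (Matrix.single a b 1) i j = dotC (coeff π a i) (coeff σ b j) := by
  simp [average, dotC, coeff, Matrix.sum_apply, Matrix.mul_apply, Matrix.single,
    Matrix.star_apply, ite_and]

lemma dotC_coeff_eq_zero_of_not_uEquiv {π : URep G d} {σ : URep G e} (hπ : URepIrreducible π)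
    (hσ : URepIrreducible σ) (hne : ¬ UEquiv π σ) (a i : Fin d) (b j : Fin e) :
    dotC (coeff π a i) (coeff σ b j) = 0 := by
  rw [← average_single_apply]
  by_contra h
  refine hne (uEquiv_of_intertwiner hπ hσ (mul_average π σ (Matrix.single a b 1))
    fun h0 => h ?_)
  rw [h0]; rfl

/-- Schur's lemma makes the average of `π g E π g⁻¹` a scalar; taking traces identifies it. -/
lemma dotC_coeff_coeff {π : URep G d} (hπ : URepIrreducible π) (a i b j : Fin d) :
    dotC (coeff π a i) (coeff π b j)
      = if a = b ∧ i = j then (Fintype.card G : ℂ) / d else 0 := by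
  set E := Matrix.single a b (1 : ℂ)
  obtain ⟨c, hc⟩ := hπ.eq_smul_one_of_commute (mul_average π π E)
  have htrace : c * d = Fintype.card G * E.trace := by
    have h := congrArg Matrix.trace hc
    simp only [average, Matrix.trace_sum, Matrix.trace_mul_cycle _ E, coe_inv_mul,
      Matrix.one_mul, Matrix.trace_smul, Matrix.trace_one] at h
    simpa [mul_comm] using h.symm
  have hd : (d : ℂ) ≠ 0 := by exact_mod_cast hπ.1.ne'
  rw [← average_single_apply, hc, eq_div_of_mul_eq hd htrace]
  by_cases hab : a = b
  · subst hab
    by_cases hij : i = j <;> simp [E, hij, Matrix.trace_single_eq_same]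
  · simp [E, hab, Matrix.trace_single_eq_of_ne]

end URep

section InvariantSubspace

variable {G : Type*} [Group G] {E : Type*} [NormedAddCommGroup E] [InnerProductSpace ℂ E]

def IsInvariantSubspace (ρ : G →* (E ≃ₗᵢ[ℂ] E)) (W : Submodule ℂ E) : Prop :=
  ∀ g, ∀ x ∈ W, ρ g x ∈ W

variable {ρ : G →* (E ≃ₗᵢ[ℂ] E)} {W : Submodule ℂ E}

lemma map_inv_apply_map (ρ : G →* (E ≃ₗᵢ[ℂ] E)) (g : G) (x : E) : ρ g⁻¹ (ρ g x) = x := by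
  change (ρ g⁻¹ * ρ g) x = x
  rw [← map_mul, inv_mul_cancel, map_one]; rfl

lemma IsInvariantSubspace.orthogonal (hW : IsInvariantSubspace ρ W) :
    IsInvariantSubspace ρ Wᗮ := by
  intro g x hx u hu
  rw [← map_inv_apply_map ρ g⁻¹ u, inv_inv, LinearIsometryEquiv.inner_map_map]
  exact hx _ (hW _ _ hu)

lemma IsInvariantSubspace.exists_minimal [FiniteDimensional ℂ E] (hW : IsInvariantSubspace ρ W)
    (hne : W ≠ ⊥) :
    ∃ W' ≤ W, W' ≠ ⊥ ∧ IsInvariantSubspace ρ W' ∧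
      ∀ U ≤ W', IsInvariantSubspace ρ U → U = ⊥ ∨ U = W' := by
  obtain ⟨W', ⟨hle, hne', hinv⟩, hmin⟩ := wellFounded_lt.has_min
    {W' : Submodule ℂ E | W' ≤ W ∧ W' ≠ ⊥ ∧ IsInvariantSubspace ρ W'} ⟨W, le_rfl, hne, hW⟩
  refine ⟨W', hle, hne', hinv, fun U hU hUinv => or_iff_not_imp_left.2 fun hU0 => ?_⟩
  exact hU.eq_of_not_lt (hmin U ⟨hU.trans hle, hU0, hUinv⟩)

namespace IsInvariantSubspace

def restrict (hW : IsInvariantSubspace ρ W) : G →* Module.End ℂ W where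
  toFun g := (ρ g).toLinearMap.restrict (hW g)
  map_one' := by ext; simp
  map_mul' g h := by ext; simp

lemma restrict_apply (hW : IsInvariantSubspace ρ W) (g : G) (x : W) :
    (hW.restrict g x : E) = ρ g x := rfl

variable [FiniteDimensional ℂ E]

lemma star_restrict (hW : IsInvariantSubspace ρ W) (g : G) :
    star (hW.restrict g) = hW.restrict g⁻¹ := by
  rw [LinearMap.star_eq_adjoint, eq_comm, LinearMap.eq_adjoint_iff]
  intro x y
  rw [Submodule.coe_inner, Submodule.coe_inner, restrict_apply, restrict_apply]
  conv_rhs => rw [← map_inv_apply_map ρ g⁻¹ (x : E), inv_inv, LinearIsometryEquiv.inner_map_map]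

def subrep (hW : IsInvariantSubspace ρ W) : URep G (finrank ℂ W) :=
  (((LinearMap.toMatrixOrthonormal (stdOrthonormalBasis ℂ W)).toRingEquiv.toMonoidHom).comp
    hW.restrict).codRestrict _ fun g => by
      rw [Matrix.mem_unitaryGroup_iff']
      change star (LinearMap.toMatrixOrthonormal _ (hW.restrict g)) *
        LinearMap.toMatrixOrthonormal _ (hW.restrict g) = 1
      rw [← map_star, star_restrict, ← map_mul, ← map_mul, inv_mul_cancel, map_one, map_one]

lemma subrep_apply (hW : IsInvariantSubspace ρ W) (g : G) :
    (hW.subrep g).1 = LinearMap.toMatrix (stdOrthonormalBasis ℂ W).toBasis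
      (stdOrthonormalBasis ℂ W).toBasis (hW.restrict g) := rfl

lemma restrict_stdOrthonormalBasis (hW : IsInvariantSubspace ρ W) (g : G) (j : Fin (finrank ℂ W)) :
    hW.restrict g (stdOrthonormalBasis ℂ W j)
      = ∑ k, (hW.subrep g).1 k j • stdOrthonormalBasis ℂ W k := by
  have := Matrix.toLin_self (stdOrthonormalBasis ℂ W).toBasis (stdOrthonormalBasis ℂ W).toBasis
    (hW.subrep g).1 j
  simpa only [subrep_apply, Matrix.toLin_toMatrix, OrthonormalBasis.coe_toBasis] using this

lemma restrict_equivFun_symm (hW : IsInvariantSubspace ρ W) (g : G) (X : Fin (finrank ℂ W) → ℂ) :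
    hW.restrict g ((stdOrthonormalBasis ℂ W).toBasis.equivFun.symm X)
      = (stdOrthonormalBasis ℂ W).toBasis.equivFun.symm ((hW.subrep g).1 *ᵥ X) := by
  apply (stdOrthonormalBasis ℂ W).toBasis.equivFun.injective
  rw [LinearEquiv.apply_symm_apply, Basis.equivFun_apply, subrep_apply,
    ← LinearMap.toMatrix_mulVec_repr (stdOrthonormalBasis ℂ W).toBasis, ← Basis.equivFun_apply,
    LinearEquiv.apply_symm_apply]

lemma subrep_irreducible (hW : IsInvariantSubspace ρ W) (hne : W ≠ ⊥)
    (hmin : ∀ U ≤ W, IsInvariantSubspace ρ U → U = ⊥ ∨ U = W) : URepIrreducible hW.subrep := by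
  set φ := (stdOrthonormalBasis ℂ W).toBasis.equivFun.symm
  set f := W.subtype ∘ₗ φ.toLinearMap
  have hf : Function.Injective f := W.injective_subtype.comp φ.injective
  have hrange : (⊤ : Submodule ℂ (Fin (finrank ℂ W) → ℂ)).map f = W := by
    rw [Submodule.map_top, LinearMap.range_comp, LinearEquiv.range, Submodule.map_top,
      Submodule.range_subtype]
  refine ⟨Module.finrank_pos_iff.2 (Submodule.nontrivial_iff_ne_bot.2 hne), fun W' hW' => ?_⟩
  have hU : IsInvariantSubspace ρ (W'.map f) := by
    rintro g _ ⟨X, hX, rfl⟩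
    refine ⟨_, hW' g X hX, ?_⟩
    change (φ _ : E) = ρ g (φ X)
    rw [← restrict_equivFun_symm, restrict_apply]
  rcases hmin _ ((Submodule.map_mono le_top).trans hrange.le) hU with h | h
  · exact Or.inl (Submodule.map_injective_of_injective hf (h.trans (Submodule.map_bot f).symm))
  · exact Or.inr (Submodule.map_injective_of_injective hf (h.trans hrange.symm))

end IsInvariantSubspace

end InvariantSubspace

section RegularRepresentation

variable {G : Type*} [Group G] [Fintype G]

def rightRegular : G →* (EuclideanSpace ℂ G ≃ₗᵢ[ℂ] EuclideanSpace ℂ G) where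
  toFun h := LinearIsometryEquiv.piLpCongrLeft 2 ℂ ℂ (Equiv.mulRight h).symm
  map_one' := by ext; simp
  map_mul' g h := by ext; simp [mul_assoc]

@[simp] lemma rightRegular_apply (h : G) (x : EuclideanSpace ℂ G) (g : G) :
    rightRegular h x g = x (g * h) := by
  simp [rightRegular]

end RegularRepresentation

section Completeness

variable {G : Type*} [Group G] {A : Type*} {d : A → ℕ}

def coeffSpan (π : ∀ α : A, URep G (d α)) : Submodule ℂ (EuclideanSpace ℂ G) :=
  Submodule.span ℂ
    (Set.range fun p : Σ α, Fin (d α) × Fin (d α) => WithLp.toLp 2 (coeff (π p.1) p.2.1 p.2.2))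

lemma toLp_coeff_mem_span_of_uEquiv {n n' : ℕ} {σ : URep G n} {π : URep G n'} (h : UEquiv σ π)
    (j i : Fin n) :
    WithLp.toLp 2 (coeff σ j i) ∈
      Submodule.span ℂ (Set.range fun p : Fin n' × Fin n' => WithLp.toLp 2 (coeff π p.1 p.2)) := by
  obtain ⟨hn, U, hU, hconj⟩ := h
  subst hn
  have hUinv : U * U⁻¹ = 1 := by rw [Matrix.inv_eq_left_inv hU.1]; exact hU.2
  have hσ : ∀ g, (σ g).1 = U * (π g).1 * U⁻¹ := fun g => by
    rw [← hconj, finCongr_refl, Matrix.reindex_refl_refl, ← Matrix.mul_assoc, ← Matrix.mul_assoc,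
      hUinv, Matrix.one_mul, Matrix.mul_assoc, hUinv, Matrix.mul_one]
  have : coeff σ j i = ∑ p : Fin n × Fin n, (U i p.1 * U⁻¹ p.2 j) • coeff π p.2 p.1 := by
    funext g
    simp only [coeff, hσ, Matrix.mul_apply, Finset.sum_mul, Finset.sum_apply, Pi.smul_apply,
      smul_eq_mul, Fintype.sum_prod_type]
    rw [Finset.sum_comm]
    exact Fintype.sum_congr _ _ fun p => Fintype.sum_congr _ _ fun q => by ring
  rw [this, WithLp.toLp_sum]
  exact Submodule.sum_mem _ fun p _ => by
    rw [WithLp.toLp_smul]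
    exact Submodule.smul_mem _ _ (Submodule.subset_span ⟨(p.2, p.1), rfl⟩)

variable [Fintype G]

lemma isInvariantSubspace_coeffSpan (π : ∀ α : A, URep G (d α)) :
    IsInvariantSubspace rightRegular (coeffSpan π) := by
  intro h
  suffices coeffSpan π ≤ (coeffSpan π).comap (rightRegular h).toLinearEquiv.toLinearMap from
    fun x hx => this hx
  refine Submodule.span_le.2 ?_
  rintro _ ⟨⟨α, k, i⟩, rfl⟩
  have : rightRegular h (WithLp.toLp 2 (coeff (π α) k i))
      = ∑ l, (π α h).1 l k • WithLp.toLp 2 (coeff (π α) l i) := by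
    ext g; simp [URep.coeff_mul_apply]
  change rightRegular h _ ∈ coeffSpan π
  rw [this]
  exact Submodule.sum_mem _ fun l _ =>
    Submodule.smul_mem _ _ (Submodule.subset_span ⟨⟨α, l, i⟩, rfl⟩)

lemma IsInvariantSubspace.stdOrthonormalBasis_eq_sum_coeff {W : Submodule ℂ (EuclideanSpace ℂ G)}
    (hW : IsInvariantSubspace rightRegular W) (j : Fin (finrank ℂ W)) :
    (stdOrthonormalBasis ℂ W j : EuclideanSpace ℂ G)
      = ∑ k, (stdOrthonormalBasis ℂ W k : EuclideanSpace ℂ G) 1 •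
          WithLp.toLp 2 (coeff hW.subrep j k) := by
  ext h
  -- evaluate `ρ h (b j) = ∑ k, σ(h)_{kj} b k` at the identity
  have := congrArg (fun x : W => (x : EuclideanSpace ℂ G) 1) (hW.restrict_stdOrthonormalBasis h j)
  simp only [IsInvariantSubspace.restrict_apply, rightRegular_apply, one_mul] at this
  rw [this]
  simp only [Submodule.coe_sum, Submodule.coe_smul, WithLp.ofLp_sum, WithLp.ofLp_smul,
    Finset.sum_apply, Pi.smul_apply, smul_eq_mul, coeff]
  exact Fintype.sum_congr _ _ fun k => mul_comm _ _

lemma le_coeffSpan_of_minimal {π : ∀ α : A, URep G (d α)}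
    (hcomplete : ∀ (n : ℕ) (σ : URep G n), URepIrreducible σ → ∃ α, UEquiv σ (π α))
    {W : Submodule ℂ (EuclideanSpace ℂ G)} (hW : IsInvariantSubspace rightRegular W) (hne : W ≠ ⊥)
    (hmin : ∀ U ≤ W, IsInvariantSubspace rightRegular U → U = ⊥ ∨ U = W) :
    W ≤ coeffSpan π := by
  obtain ⟨α, hα⟩ := hcomplete _ _ (hW.subrep_irreducible hne hmin)
  have hspan : Submodule.span ℂ (Set.range fun p : Fin (d α) × Fin (d α) =>
      WithLp.toLp 2 (coeff (π α) p.1 p.2)) ≤ coeffSpan π :=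
    Submodule.span_mono (Set.range_subset_iff.2 fun p => ⟨⟨α, p⟩, rfl⟩)
  have hb : ∀ j, (stdOrthonormalBasis ℂ W j : EuclideanSpace ℂ G) ∈ coeffSpan π := fun j => by
    rw [hW.stdOrthonormalBasis_eq_sum_coeff j]
    exact Submodule.sum_mem _ fun k _ =>
      Submodule.smul_mem _ _ (hspan (toLp_coeff_mem_span_of_uEquiv hα j k))
  intro x hx
  rw [← Submodule.coe_mk x hx, ← (stdOrthonormalBasis ℂ W).sum_repr ⟨x, hx⟩, Submodule.coe_sum]
  exact Submodule.sum_mem _ fun j _ => Submodule.smul_mem _ _ (hb j)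

lemma coeffSpan_eq_top {π : ∀ α : A, URep G (d α)}
    (hcomplete : ∀ (n : ℕ) (σ : URep G n), URepIrreducible σ → ∃ α, UEquiv σ (π α)) :
    coeffSpan π = ⊤ := by
  by_contra hne
  obtain ⟨W, hle, hW0, hW, hmin⟩ := (isInvariantSubspace_coeffSpan π).orthogonal.exists_minimal
    fun h => hne (Submodule.orthogonal_eq_bot_iff.1 h)
  refine hW0 (eq_bot_iff.2 ?_)
  rw [← Submodule.inf_orthogonal_eq_bot (coeffSpan π)]
  exact le_inf (le_coeffSpan_of_minimal hcomplete hW hW0 hmin) hle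

end Completeness

section L2

variable {X : Type*} [Fintype X]

lemma dotC_eq_inner (u v : X → ℂ) : dotC u v = ⟪WithLp.toLp 2 v, WithLp.toLp 2 u⟫_ℂ := by
  simp [dotC, PiLp.inner_apply]

lemma norm2_eq_norm_sq (u : X → ℂ) : norm2 u = ‖WithLp.toLp 2 u‖ ^ 2 := by
  simp [norm2, EuclideanSpace.norm_sq_eq, Complex.normSq_eq_norm_sq]

end L2

section Parseval

variable {G : Type*} [Group G] [Fintype G] {A : Type*} {d : A → ℕ}

def normalizedCoeff (π : ∀ α : A, URep G (d α)) (p : Σ α, Fin (d α) × Fin (d α)) :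
    EuclideanSpace ℂ G :=
  (Real.sqrt (d p.1 / Fintype.card G) : ℂ) • WithLp.toLp 2 (coeff (π p.1) p.2.1 p.2.2)

lemma orthonormal_normalizedCoeff {π : ∀ α : A, URep G (d α)} (hirr : ∀ α, URepIrreducible (π α))
    (hpair : ∀ α β, α ≠ β → ¬ UEquiv (π α) (π β)) : Orthonormal ℂ (normalizedCoeff π) := by
  classical
  rw [orthonormal_iff_ite]
  rintro ⟨α, k, i⟩ ⟨β, l, j⟩
  simp only [normalizedCoeff, inner_smul_left, inner_smul_right, ← dotC_eq_inner,
    Complex.conj_ofReal]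
  by_cases hαβ : α = β
  · subst hαβ
    rw [URep.dotC_coeff_coeff (hirr α)]
    by_cases hkl : l = k ∧ j = i
    · obtain ⟨rfl, rfl⟩ := hkl
      have hG : (Fintype.card G : ℂ) ≠ 0 := by exact_mod_cast Fintype.card_pos.ne'
      have hd : (d α : ℂ) ≠ 0 := by exact_mod_cast (hirr α).1.ne'
      rw [if_pos ⟨rfl, rfl⟩, if_pos rfl, ← mul_assoc, ← Complex.ofReal_mul,
        Real.mul_self_sqrt (by positivity)]
      push_cast
      field_simp
    · rw [if_neg hkl, if_neg fun h => hkl (by simp_all), mul_zero, mul_zero]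
  · rw [URep.dotC_coeff_eq_zero_of_not_uEquiv (hirr β) (hirr α) (hpair β α (Ne.symm hαβ))]
    simp [hαβ]

lemma sum_normSq_dotC_coeff [Fintype A] {π : ∀ α : A, URep G (d α)}
    (hirr : ∀ α, URepIrreducible (π α)) (hpair : ∀ α β, α ≠ β → ¬ UEquiv (π α) (π β))
    (hcomplete : ∀ (n : ℕ) (σ : URep G n), URepIrreducible σ → ∃ α, UEquiv σ (π α))
    (f : G → ℂ) :
    ∑ p : Σ α, Fin (d α) × Fin (d α),
      (d p.1 / Fintype.card G : ℝ) * Complex.normSq (dotC f (coeff (π p.1) p.2.1 p.2.2))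
      = norm2 f := by
  have hspan : ⊤ ≤ Submodule.span ℂ (Set.range (normalizedCoeff π)) := by
    rw [← coeffSpan_eq_top hcomplete]
    refine Submodule.span_le.2 ?_
    rintro _ ⟨p, rfl⟩
    have hs : (Real.sqrt (d p.1 / Fintype.card G) : ℂ) ≠ 0 :=
      Complex.ofReal_ne_zero.2 (Real.sqrt_ne_zero'.2
        (div_pos (by exact_mod_cast (hirr p.1).1) (by exact_mod_cast Fintype.card_pos)))
    have : WithLp.toLp 2 (coeff (π p.1) p.2.1 p.2.2)
        = (Real.sqrt (d p.1 / Fintype.card G) : ℂ)⁻¹ • normalizedCoeff π p := by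
      rw [normalizedCoeff, smul_smul, inv_mul_cancel₀ hs, one_smul]
    change WithLp.toLp 2 _ ∈ _
    rw [this]
    exact Submodule.smul_mem _ _ (Submodule.subset_span ⟨p, rfl⟩)
  set b := OrthonormalBasis.mk (orthonormal_normalizedCoeff hirr hpair) hspan
  rw [norm2_eq_norm_sq, ← b.sum_sq_norm_inner_right]
  refine Fintype.sum_congr _ _ fun p => ?_
  rw [OrthonormalBasis.coe_mk, normalizedCoeff, inner_smul_left, ← dotC_eq_inner, norm_mul,
    mul_pow, RCLike.norm_conj, Complex.norm_real, Real.norm_eq_abs, sq_abs,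
    Real.sq_sqrt (by positivity), Complex.normSq_eq_norm_sq]

end Parseval

section TightFrames

variable {E : Type*} [NormedAddCommGroup E] [InnerProductSpace ℂ E]

lemma OrthogonalFamily.sum_sum_norm_inner_sq {ι : Type*} {K : ι → Submodule ℂ E}
    (hK : OrthogonalFamily ℂ (fun i => K i) fun i => (K i).subtypeₗᵢ) (s : Finset ι)
    {κ : ι → Type*} [∀ i, Fintype (κ i)] (F : ∀ i, κ i → E) (hF : ∀ i ∈ s, ∀ t, F i t ∈ K i)
    (C : ℝ) (htight : ∀ i ∈ s, ∀ v ∈ K i, ∑ t, ‖⟪F i t, v⟫_ℂ‖ ^ 2 = C * ‖v‖ ^ 2)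
    (w : ∀ i, K i) :
    ∑ i ∈ s, ∑ t, ‖⟪F i t, ∑ j ∈ s, (w j : E)⟫_ℂ‖ ^ 2 = C * ‖∑ j ∈ s, (w j : E)‖ ^ 2 := by
  classical
  have hinner : ∀ i ∈ s, ∀ t, ⟪F i t, ∑ j ∈ s, (w j : E)⟫_ℂ = ⟪F i t, w i⟫_ℂ := fun i hi t => by
    rw [_root_.inner_sum]
    exact Finset.sum_eq_single_of_mem i hi fun j _ hji => hK (Ne.symm hji) ⟨F i t, hF i hi t⟩ (w j)
  have hnorm := hK.norm_sum w s
  simp only [Submodule.coe_subtypeₗᵢ, Submodule.subtype_apply] at hnorm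
  rw [hnorm, Finset.mul_sum]
  refine Finset.sum_congr rfl fun i hi => ?_
  simp only [hinner i hi]
  exact htight i hi _ (w i).2

lemma LinearMap.IsSymmetric.exists_eq_sum_eigenspace [FiniteDimensional ℂ E] {T : E →ₗ[ℂ] E}
    (hT : T.IsSymmetric) {Λ : Finset ℝ} (hΛ : ∀ μ : ℝ, Module.End.HasEigenvalue T μ → μ ∈ Λ)
    (v : E) : ∃ w : ∀ μ : ℝ, Module.End.eigenspace T μ, v = ∑ μ ∈ Λ, (w μ : E) := by
  classical
  set b := hT.eigenvectorBasis rfl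
  set eig := hT.eigenvalues rfl
  have hb : ∀ j, b j ∈ Module.End.eigenspace T (eig j) := fun j =>
    Module.End.mem_eigenspace_iff.2 (hT.apply_eigenvectorBasis rfl j)
  refine ⟨fun μ => ⟨∑ j ∈ Finset.univ.filter (eig · = μ), ⟪b j, v⟫_ℂ • b j,
    Submodule.sum_mem _ fun j hj => Submodule.smul_mem _ _ ?_⟩, ?_⟩
  · rw [← (Finset.mem_filter.1 hj).2]; exact hb j
  · simp only
    rw [Finset.sum_fiberwise_of_maps_to fun j _ =>
      hΛ _ (by simpa using hT.hasEigenvalue_eigenvalues rfl j)]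
    exact (b.sum_repr' v).symm

end TightFrames

section HermitianFrames

variable {n : ℕ}

lemma isEigvec_iff_mem_eigenspace (M : Matrix (Fin n) (Fin n) ℂ) (μ : ℝ) (X : Fin n → ℂ) :
    IsEigvec M μ X ↔ WithLp.toLp 2 X ∈ Module.End.eigenspace M.toEuclideanLin μ := by
  rw [Module.End.mem_eigenspace_iff, IsEigvec]
  exact (WithLp.toLp_injective 2).eq_iff.symm

lemma isEigval_of_hasEigenvalue {M : Matrix (Fin n) (Fin n) ℂ} {μ : ℝ}
    (h : Module.End.HasEigenvalue M.toEuclideanLin μ) : IsEigval M μ := by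
  obtain ⟨x, hx, hx0⟩ := h.exists_hasEigenvector
  exact ⟨x.ofLp, by simpa using hx0, (isEigvec_iff_mem_eigenspace M μ x.ofLp).2 hx⟩

lemma Matrix.IsHermitian.sum_normSq_dotC_frames {M : Matrix (Fin n) (Fin n) ℂ}
    (hM : M.IsHermitian) {Λ : Finset ℝ} (hΛ : ∀ μ, IsEigval M μ → μ ∈ Λ) {κ : ℝ → Type*}
    [∀ μ, Fintype (κ μ)] (F : ∀ μ, κ μ → Fin n → ℂ) (C : ℝ)
    (hmem : ∀ μ ∈ Λ, ∀ t, IsEigvec M μ (F μ t))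
    (htight : ∀ μ ∈ Λ, ∀ v, IsEigvec M μ v → ∑ t, Complex.normSq (dotC v (F μ t)) = C * norm2 v)
    (v : Fin n → ℂ) :
    ∑ μ ∈ Λ, ∑ t, Complex.normSq (dotC v (F μ t)) = C * norm2 v := by
  have hT := Matrix.isSymmetric_toEuclideanLin_iff.2 hM
  obtain ⟨w, hw⟩ := hT.exists_eq_sum_eigenspace (fun μ hμ => hΛ μ (isEigval_of_hasEigenvalue hμ))
    (WithLp.toLp 2 v)
  have := (hT.orthogonalFamily_eigenspaces.comp Complex.ofReal_injective).sum_sum_norm_inner_sq Λ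
    (fun μ t => WithLp.toLp 2 (F μ t))
    (fun μ hμ t => (isEigvec_iff_mem_eigenspace M μ _).1 (hmem μ hμ t)) C
    (fun μ hμ x hx => by
      simpa [dotC_eq_inner, norm2_eq_norm_sq, Complex.normSq_eq_norm_sq] using
        htight μ hμ x.ofLp ((isEigvec_iff_mem_eigenspace M μ x.ofLp).2 hx)) w
  rw [← hw] at this
  simpa [dotC_eq_inner, norm2_eq_norm_sq, Complex.normSq_eq_norm_sq] using this

end HermitianFrames

section Theta

variable {G : Type*} [Group G] {d : ℕ}

lemma repSum_isHermitian (π : URep G d) {S : Finset G} (hS : ∀ s ∈ S, s⁻¹ ∈ S) :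
    (repSum π S).IsHermitian := by
  rw [Matrix.IsHermitian, repSum, Matrix.conjTranspose_sum]
  refine Finset.sum_bij' (fun a _ => a⁻¹) (fun a _ => a⁻¹) (fun a ha => hS a ha)
    (fun a ha => hS a ha) (fun a _ => inv_inv a) (fun a _ => inv_inv a) fun a _ => ?_
  rw [← URep.conjTranspose_coe_inv, Matrix.conjTranspose_conjTranspose]

variable [Fintype G]

lemma dotC_ofReal_mul_theta (π : URep G d) (i : Fin d) (c : ℝ) (f : G → ℂ) (X : Fin d → ℂ) :
    dotC f (fun g => (c : ℂ) * Theta π i X g)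
      = dotC (fun k => (c : ℂ) * dotC f (coeff π k i)) X := by
  simp only [dotC, Theta, map_mul, Complex.conj_ofReal, map_sum, Finset.mul_sum, Finset.sum_mul]
  rw [Finset.sum_comm]
  exact Fintype.sum_congr _ _ fun k => Fintype.sum_congr _ _ fun g => by ring

end Theta

theorem stmt17_general {n : ℕ} (S : Finset (Equiv.Perm (Fin n)))
    (hS : ∀ s ∈ S, s⁻¹ ∈ S) {A : Type*} [Fintype A] {d : A → ℕ}
    (π : ∀ α : A, URep (Equiv.Perm (Fin n)) (d α))
    (hirr : ∀ α, URepIrreducible (π α))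
    (hpair : ∀ α β, α ≠ β → ¬ UEquiv (π α) (π β))
    (hcomplete : ∀ (d' : ℕ) (σ : URep (Equiv.Perm (Fin n)) d'),
        URepIrreducible σ → ∃ α, UEquiv σ (π α))
    (Λ : A → Finset ℝ) (hΛ : ∀ α (lam : ℝ), lam ∈ Λ α ↔ IsEigval (repSum (π α) S) lam)
    (C : ℝ)
    {ι : (α : A) → Fin (d α) → ℝ → Type*} [∀ α i lam, Fintype (ι α i lam)]
    (F : (α : A) → (i : Fin (d α)) → (lam : ℝ) → ι α i lam → (Fin (d α) → ℂ))
    (hmem : ∀ α (i : Fin (d α)) (lam : ℝ), lam ∈ Λ α →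
        ∀ t, IsEigvec (repSum (π α) S) lam (F α i lam t))
    (htight : ∀ α (i : Fin (d α)) (lam : ℝ), lam ∈ Λ α →
        ∀ v : Fin (d α) → ℂ, IsEigvec (repSum (π α) S) lam v →
          ∑ t, Complex.normSq (dotC v (F α i lam t)) = C * norm2 v) :
    ∀ f : Equiv.Perm (Fin n) → ℂ,
      ∑ p : Σ α : A, Σ i : Fin (d α), Σ lam : (Λ α), ι α i (lam : ℝ),
        Complex.normSq (dotC f (ThetaT n (π p.1) p.2.1 (F p.1 p.2.1 (p.2.2.1 : ℝ) p.2.2.2)))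
        = C * norm2 f := by
  intro f
  set v : ∀ α, Fin (d α) → Fin (d α) → ℂ :=
    fun α i k => (Real.sqrt (d α / n.factorial) : ℂ) * dotC f (coeff (π α) k i)
  have hframe : ∀ α i, ∑ lam ∈ Λ α, ∑ t, Complex.normSq (dotC (v α i) (F α i lam t))
      = C * norm2 (v α i) := fun α i =>
    (repSum_isHermitian (π α) hS).sum_normSq_dotC_frames (fun μ hμ => (hΛ α μ).2 hμ) (F α i) C
      (hmem α i) (htight α i) (v α i)
  have hparseval : ∑ α, ∑ i, norm2 (v α i) = norm2 f := by
    rw [← sum_normSq_dotC_coeff hirr hpair hcomplete f, Fintype.sum_sigma]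
    refine Fintype.sum_congr _ _ fun α => ?_
    rw [Fintype.sum_prod_type, Finset.sum_comm]
    refine Fintype.sum_congr _ _ fun i => Fintype.sum_congr _ _ fun k => ?_
    rw [Complex.normSq_mul, Complex.normSq_ofReal, Real.mul_self_sqrt (by positivity),
      Fintype.card_perm, Fintype.card_fin]
  calc _ = ∑ α, ∑ i, ∑ lam ∈ Λ α, ∑ t, Complex.normSq (dotC (v α i) (F α i lam t)) := by
        simp only [Fintype.sum_sigma]
        refine Fintype.sum_congr _ _ fun α => Fintype.sum_congr _ _ fun i => ?_
        rw [← Finset.sum_coe_sort (Λ α)]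
        exact Fintype.sum_congr _ _ fun lam => Fintype.sum_congr _ _ fun t =>
          congrArg Complex.normSq (dotC_ofReal_mul_theta _ _ _ f _)
    _ = C * norm2 f := by simp only [hframe, ← Finset.mul_sum, hparseval]

/-- If each `F^{α,λ}_i` is a tight frame for `E_λ(π^α(S))` with frame constant
`C`, then `Φ = {Θ̃_{π^α,i,λ}(ψ)}` is a tight frame for `L²(𝕊_n)` with frame constant `C`:
`∑_{φ ∈ Φ} |⟨f, φ⟩|² = C‖f‖²` for all `f ∈ L²(𝕊_n)`. -/
theorem stmt17 {n : ℕ} (hn : 1 ≤ n) (S : Finset (Equiv.Perm (Fin n)))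
    (hS : ∀ s ∈ S, s⁻¹ ∈ S) {A : Type*} [Fintype A] {d : A → ℕ}
    (π : ∀ α : A, URep (Equiv.Perm (Fin n)) (d α))
    (hirr : ∀ α, URepIrreducible (π α))
    (hpair : ∀ α β, α ≠ β → ¬ UEquiv (π α) (π β))
    (hcomplete : ∀ (d' : ℕ) (σ : URep (Equiv.Perm (Fin n)) d'),
        URepIrreducible σ → ∃ α, UEquiv σ (π α))
    (Λ : A → Finset ℝ) (hΛ : ∀ α (lam : ℝ), lam ∈ Λ α ↔ IsEigval (repSum (π α) S) lam)
    (C : ℝ) (hC : 0 < C)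
    {ι : (α : A) → Fin (d α) → ℝ → Type*} [∀ α i lam, Fintype (ι α i lam)]
    (F : (α : A) → (i : Fin (d α)) → (lam : ℝ) → ι α i lam → (Fin (d α) → ℂ))
    (hmem : ∀ α (i : Fin (d α)) (lam : ℝ), lam ∈ Λ α →
        ∀ t, IsEigvec (repSum (π α) S) lam (F α i lam t))
    (htight : ∀ α (i : Fin (d α)) (lam : ℝ), lam ∈ Λ α →
        ∀ v : Fin (d α) → ℂ, IsEigvec (repSum (π α) S) lam v →
          ∑ t, Complex.normSq (dotC v (F α i lam t)) = C * norm2 v) :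
    ∀ f : Equiv.Perm (Fin n) → ℂ,
      ∑ p : Σ α : A, Σ i : Fin (d α), Σ lam : (Λ α), ι α i (lam : ℝ),
        Complex.normSq (dotC f (ThetaT n (π p.1) p.2.1 (F p.1 p.2.1 (p.2.2.1 : ℝ) p.2.2.2)))
        = C * norm2 f :=
  stmt17_general S hS π hirr hpair hcomplete Λ hΛ C F hmem htight
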